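/- arXiv:2208.12084 — 4 statements merged into one kernel-verified Lean document; each statement's English description precedes it below -/
import Mathlib

section
/- Let k be a universal kernel on [0,1] with feature map φ into its RKHS H, and let q ≥ 1. Define V := f(X) conditioned on g(X) = 1 and S-MMCE(f,g;q,k,P) := ‖E[|E[Y|V] − V|^q φ(V)]‖_H^{1/q}. Then S-MMCE(f,g;q,k,P) = 0 if and only if (f,g) is almost surely selectively calibrated, i.e., P(E[Y | V] = V) = 1. -/
/-!
Universality yields `v ∈ H` with `⟪φ r, v⟫ > 0` on `[0,1]`. Pairing the S-MMCE vector
`∫ |E[Y|V] - V|^q • φ(V)` with `v` gives the integral of the nonnegative function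
`|E[Y|V] - V|^q ⟪φ(V), v⟫`, which vanishes only if `E[Y|V] = V` almost surely.
-/

open MeasureTheory ProbabilityTheory
open scoped RealInnerProductSpace

section

variable {Ω H : Type*} {m mΩ : MeasurableSpace Ω} {ν : Measure Ω}
  [NormedAddCommGroup H] [InnerProductSpace ℝ H]

theorem ae_eq_zero_of_integral_smul_eq_zero [CompleteSpace H] {W : Ω → ℝ} {ψ : Ω → H}
    {v : H} (hW : 0 ≤ᵐ[ν] W) (hv : ∀ᵐ ω ∂ν, 0 < ⟪ψ ω, v⟫)
    (hint : Integrable (fun ω ↦ W ω • ψ ω) ν) (h0 : ∫ ω, W ω • ψ ω ∂ν = 0) :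
    W =ᵐ[ν] 0 := by
  have hproj : ∫ ω, W ω * ⟪ψ ω, v⟫ ∂ν = 0 := by
    simpa [real_inner_smul_right, real_inner_comm, h0] using integral_inner (𝕜 := ℝ) hint v
  have hprod_int : Integrable (fun ω ↦ W ω * ⟪ψ ω, v⟫) ν := by
    simpa [real_inner_smul_left] using hint.inner_const (𝕜 := ℝ) v
  have hprod_nonneg : 0 ≤ᵐ[ν] fun ω ↦ W ω * ⟪ψ ω, v⟫ := by
    filter_upwards [hW, hv] with ω hWω hvω using mul_nonneg hWω hvω.le
  filter_upwards [(integral_eq_zero_iff_of_nonneg_ae hprod_nonneg hprod_int).1 hproj, hv]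
    with ω hω hvω
  exact (mul_eq_zero.1 hω).resolve_right hvω.ne'

theorem integral_rpow_abs_sub_smul_eq_zero_iff [CompleteSpace H] {a b : Ω → ℝ} {ψ : Ω → H}
    {v : H} {q : ℝ} (hq : q ≠ 0) (hv : ∀ᵐ ω ∂ν, 0 < ⟪ψ ω, v⟫)
    (hint : Integrable (fun ω ↦ |a ω - b ω| ^ q • ψ ω) ν) :
    ∫ ω, |a ω - b ω| ^ q • ψ ω ∂ν = 0 ↔ a =ᵐ[ν] b := by
  constructor
  · intro h0
    have hW : 0 ≤ᵐ[ν] fun ω ↦ |a ω - b ω| ^ q :=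
      ae_of_all _ fun ω ↦ Real.rpow_nonneg (abs_nonneg _) q
    filter_upwards [ae_eq_zero_of_integral_smul_eq_zero hW hv hint h0] with ω hω
    have := (Real.rpow_eq_zero (abs_nonneg _) hq).1 hω
    exact sub_eq_zero.1 (abs_eq_zero.1 this)
  · intro hab
    refine integral_eq_zero_of_ae ?_
    filter_upwards [hab] with ω hω
    simp [hω, Real.zero_rpow hq]

theorem integrable_rpow_abs_condExp_sub_smul [IsFiniteMeasure ν] (hm : m ≤ mΩ) {Y f : Ω → ℝ} {ψ : Ω → H} {R C q : ℝ} (hq : 0 ≤ q)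
    (hY : ∀ᵐ ω ∂ν, |Y ω| ≤ R) (hfm : AEStronglyMeasurable f ν) (hf : ∀ᵐ ω ∂ν, |f ω| ≤ R)
    (hψm : AEStronglyMeasurable ψ ν) (hψ : ∀ᵐ ω ∂ν, ‖ψ ω‖ ≤ C) :
    Integrable (fun ω ↦ |ν[Y|m] ω - f ω| ^ q • ψ ω) ν := by
  have hdiff : AEStronglyMeasurable (fun ω ↦ ν[Y|m] ω - f ω) ν :=
    (stronglyMeasurable_condExp.mono hm).aestronglyMeasurable.sub hfm
  have hW_bound : ∀ᵐ ω ∂ν, ‖|ν[Y|m] ω - f ω| ^ q‖ ≤ (R + R) ^ q := by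
    filter_upwards [ae_bdd_abs_condExp_of_ae_bdd_abs (m := m) hY, hf] with ω hYω hfω
    rw [Real.norm_eq_abs, abs_of_nonneg (Real.rpow_nonneg (abs_nonneg _) q)]
    exact Real.rpow_le_rpow (abs_nonneg _) ((abs_sub _ _).trans (add_le_add hYω hfω)) hq
  have hW : Integrable (fun ω ↦ |ν[Y|m] ω - f ω| ^ q) ν :=
    Integrable.of_bound (hdiff.aemeasurable.abs.pow_const q).aestronglyMeasurable _ hW_bound
  exact hW.smul_bdd C hψm hψ

end

theorem smmce_faithful_general
    {Ω : Type*} [MeasurableSpace Ω] (μ : Measure Ω)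
    {H : Type*} [NormedAddCommGroup H] [InnerProductSpace ℝ H] [CompleteSpace H]
    (φ : ℝ → H) (hφ : Continuous φ)
    (huniv : ∀ c : ℝ → ℝ, ContinuousOn c (Set.Icc (0:ℝ) 1) → ∀ ε > 0,
      ∃ h : H, ∀ r ∈ Set.Icc (0:ℝ) 1, |c r - ⟪φ r, h⟫| < ε)
    (f Y : Ω → ℝ) (g : Ω → Bool)
    (hf : Measurable f)
    (hfr : ∀ ω, f ω ∈ Set.Icc (0:ℝ) 1) (hYr : ∀ ω, Y ω = 0 ∨ Y ω = 1)
    (q : ℝ) (hq : 1 ≤ q) :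
    (‖∫ ω, |MeasureTheory.condExp (MeasurableSpace.comap f inferInstance)
          (ProbabilityTheory.cond μ {ω | g ω = true}) Y ω - f ω| ^ q • φ (f ω)
        ∂(ProbabilityTheory.cond μ {ω | g ω = true})‖ ^ (1/q) = 0)
    ↔ (MeasureTheory.condExp (MeasurableSpace.comap f inferInstance)
          (ProbabilityTheory.cond μ {ω | g ω = true}) Y
        =ᵐ[ProbabilityTheory.cond μ {ω | g ω = true}] f) := by
  set ν := cond μ {ω | g ω = true}
  obtain ⟨M, hM⟩ := isCompact_Icc.exists_bound_of_continuousOn hφ.continuousOn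
  obtain ⟨v, hv⟩ := huniv (fun _ ↦ 1) continuousOn_const (1 / 2) (by norm_num)
  have hpos : ∀ᵐ ω ∂ν, 0 < ⟪φ (f ω), v⟫ :=
    ae_of_all _ fun ω ↦ by linarith [(abs_lt.1 (hv _ (hfr ω))).2]
  have hY_bound : ∀ᵐ ω ∂ν, |Y ω| ≤ 1 :=
    ae_of_all _ fun ω ↦ by rcases hYr ω with h | h <;> simp [h]
  have hf_bound : ∀ᵐ ω ∂ν, |f ω| ≤ 1 :=
    ae_of_all _ fun ω ↦ abs_le.2 ⟨by linarith [(hfr ω).1], (hfr ω).2⟩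
  have hint := integrable_rpow_abs_condExp_sub_smul hf.comap_le (by linarith) hY_bound
    hf.aestronglyMeasurable hf_bound (hφ.comp_aestronglyMeasurable hf.aestronglyMeasurable)
    (ae_of_all _ fun ω ↦ hM _ (hfr ω))
  rw [Real.rpow_eq_zero (norm_nonneg _) (by positivity), norm_eq_zero]
  exact integral_rpow_abs_sub_smul_eq_zero_iff (by linarith) hpos hint

/-- **Faithfulness of S-MMCE.** Let `k` be a (continuous) universal kernel on `[0,1]`,
given via its feature map `φ` into its RKHS `H` (universality: functions `r ↦ ⟪φ r, h⟫`
are dense in the continuous functions on `[0,1]` w.r.t. the sup norm), and let `q ≥ 1`.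
With `ν` the conditional law given `g(X) = 1`, `V := f(X)` and
`S-MMCE := ‖E_ν[|E_ν[Y|V] − V|^q φ(V)]‖^{1/q}`, we have `S-MMCE = 0` iff `(f, g)` is
almost surely selectively calibrated, i.e. `E_ν[Y | f(X)] = f(X)` `ν`-a.s. -/
theorem smmce_faithful
    {Ω : Type*} [MeasurableSpace Ω] (μ : Measure Ω) [IsProbabilityMeasure μ]
    {H : Type*} [NormedAddCommGroup H] [InnerProductSpace ℝ H] [CompleteSpace H]
    (φ : ℝ → H) (hφ : Continuous φ)
    (huniv : ∀ c : ℝ → ℝ, ContinuousOn c (Set.Icc (0:ℝ) 1) → ∀ ε > 0,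
      ∃ h : H, ∀ r ∈ Set.Icc (0:ℝ) 1, |c r - ⟪φ r, h⟫| < ε)
    (f Y : Ω → ℝ) (g : Ω → Bool)
    (hf : Measurable f) (hY : Measurable Y) (hg : Measurable g)
    (hfr : ∀ ω, f ω ∈ Set.Icc (0:ℝ) 1) (hYr : ∀ ω, Y ω = 0 ∨ Y ω = 1)
    (hcov : 0 < μ {ω | g ω = true})
    (q : ℝ) (hq : 1 ≤ q) :
    (‖∫ ω, |MeasureTheory.condExp (MeasurableSpace.comap f inferInstance)
          (ProbabilityTheory.cond μ {ω | g ω = true}) Y ω - f ω| ^ q • φ (f ω)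
        ∂(ProbabilityTheory.cond μ {ω | g ω = true})‖ ^ (1/q) = 0)
    ↔ (MeasureTheory.condExp (MeasurableSpace.comap f inferInstance)
          (ProbabilityTheory.cond μ {ω | g ω = true}) Y
        =ᵐ[ProbabilityTheory.cond μ {ω | g ω = true}] f) :=
  smmce_faithful_general μ φ hφ huniv f Y g hf hfr hYr q hq
end

section
/- For any kernel k on [0,1] with feature map φ, any q ≥ 1, and any (f,g) with P(g(X)=1) > 0, the selective maximum mean calibration error is bounded by S-MMCE(f,g;q,k,P) ≤ K^{1/(2q)} · S-BCE(f,g;q,P), where K := max_{α ∈ [0,1]} k(α,α). -/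
open MeasureTheory ProbabilityTheory
open scoped RealInnerProductSpace

/-! The bound `k(α, α) ≤ K` on `[0, 1]` says `‖φ α‖ ≤ √K` there, so the triangle inequality for
Bochner integrals gives `‖E[|E[Y|V] - V|^q φ(V)]‖ ≤ √K · E[|E[Y|V] - V|^q]`; taking `q`-th roots
yields the claim. The only measure-theoretic input is that the integrand is integrable, which holds
because `Y` and `f` are bounded, hence so is `E[Y|V]`. -/

lemma norm_le_sqrt_of_isGreatest_inner_self {α H : Type*} [NormedAddCommGroup H]
    [InnerProductSpace ℝ H] {φ : α → H} {s : Set α} {K : ℝ}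
    (hK : IsGreatest ((fun a => ⟪φ a, φ a⟫) '' s) K) {a : α} (ha : a ∈ s) : ‖φ a‖ ≤ √K := by
  have h : ‖φ a‖ ^ 2 ≤ K := real_inner_self_eq_norm_sq (φ a) ▸ hK.2 ⟨a, ha, rfl⟩
  simpa using Real.abs_le_sqrt h

section Integral

variable {α E : Type*} {m m0 : MeasurableSpace α} {μ : Measure α}
  [NormedAddCommGroup E] [NormedSpace ℝ E]

lemma norm_integral_smul_le_mul_integral {h : α → ℝ} {v : α → E} {C : ℝ}
    (hint : Integrable h μ) (h0 : 0 ≤ᵐ[μ] h) (hv : ∀ᵐ x ∂μ, ‖v x‖ ≤ C) :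
    ‖∫ x, h x • v x ∂μ‖ ≤ C * ∫ x, h x ∂μ := by
  rw [← integral_const_mul]
  refine norm_integral_le_of_norm_le (hint.const_mul C) ?_
  filter_upwards [h0, hv] with x hx hvx
  rw [norm_smul, Real.norm_of_nonneg hx, mul_comm C]
  exact mul_le_mul_of_nonneg_left hvx hx

lemma integrable_abs_condExp_sub_rpow [IsFiniteMeasure μ] {Y f : α → ℝ} {R q : ℝ} (hq : 0 ≤ q) (hf : AEMeasurable f μ)
    (hY : ∀ᵐ x ∂μ, |Y x| ≤ R) (hfR : ∀ᵐ x ∂μ, |f x| ≤ R) :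
    Integrable (fun x => |μ[Y | m] x - f x| ^ q) μ := by
  have hmeas : AEMeasurable (fun x => |μ[Y | m] x - f x| ^ q) μ :=
    ((integrable_condExp.aemeasurable.sub hf).abs).pow_const q
  refine Integrable.of_bound hmeas.aestronglyMeasurable ((R + R) ^ q) ?_
  filter_upwards [ae_bdd_abs_condExp_of_ae_bdd_abs (m := m) hY, hfR] with x hcx hfx
  rw [Real.norm_of_nonneg (by positivity)]
  exact Real.rpow_le_rpow (abs_nonneg _) ((abs_sub _ _).trans (add_le_add hcx hfx)) hq

end Integral

lemma rpow_one_div_le_of_le_sqrt_mul {x y K q : ℝ} (hx : 0 ≤ x) (hy : 0 ≤ y) (hK : 0 ≤ K)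
    (hq : 0 ≤ q) (h : x ≤ √K * y) : x ^ (1 / q) ≤ K ^ (1 / (2 * q)) * y ^ (1 / q) :=
  calc x ^ (1 / q) ≤ (√K * y) ^ (1 / q) := Real.rpow_le_rpow hx h (by positivity)
    _ = √K ^ (1 / q) * y ^ (1 / q) := Real.mul_rpow (Real.sqrt_nonneg K) hy
    _ = K ^ (1 / (2 * q)) * y ^ (1 / q) := by
      rw [Real.sqrt_eq_rpow, ← Real.rpow_mul hK, one_div_mul_one_div]

theorem smmce_le_sbce_general
    {Ω : Type*} [MeasurableSpace Ω] (μ : Measure Ω)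
    {H : Type*} [NormedAddCommGroup H] [InnerProductSpace ℝ H]
    (φ : ℝ → H)
    (K : ℝ) (hK : IsGreatest ((fun α => ⟪φ α, φ α⟫) '' Set.Icc (0:ℝ) 1) K)
    (f Y : Ω → ℝ) (g : Ω → Bool)
    (hf : Measurable f)
    (hfr : ∀ ω, f ω ∈ Set.Icc (0:ℝ) 1) (hYr : ∀ ω, Y ω = 0 ∨ Y ω = 1)
    (q : ℝ) (hq : 1 ≤ q) :
    ‖∫ ω, |MeasureTheory.condExp (MeasurableSpace.comap f inferInstance)
          (ProbabilityTheory.cond μ {ω | g ω = true}) Y ω - f ω| ^ q • φ (f ω)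
        ∂(ProbabilityTheory.cond μ {ω | g ω = true})‖ ^ (1/q)
      ≤ K ^ (1/(2*q)) *
        (∫ ω, |MeasureTheory.condExp (MeasurableSpace.comap f inferInstance)
            (ProbabilityTheory.cond μ {ω | g ω = true}) Y ω - f ω| ^ q
          ∂(ProbabilityTheory.cond μ {ω | g ω = true})) ^ (1/q) := by
  have hK0 : 0 ≤ K := by
    obtain ⟨α, -, rfl⟩ := hK.1
    exact real_inner_self_nonneg
  have hY1 : ∀ᵐ ω ∂μ[|{ω | g ω = true}], |Y ω| ≤ 1 :=
    ae_of_all _ fun ω => by rcases hYr ω with h | h <;> simp [h]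
  have hf1 : ∀ᵐ ω ∂μ[|{ω | g ω = true}], |f ω| ≤ 1 :=
    ae_of_all _ fun ω => abs_le.2 ⟨by linarith [(hfr ω).1], (hfr ω).2⟩
  have hq0 : 0 ≤ q := zero_le_one.trans hq
  have hint := integrable_abs_condExp_sub_rpow (m := MeasurableSpace.comap f inferInstance)
    hq0 hf.aemeasurable hY1 hf1
  refine rpow_one_div_le_of_le_sqrt_mul (norm_nonneg _)
    (integral_nonneg fun _ => by positivity) hK0 hq0 ?_
  exact norm_integral_smul_le_mul_integral hint (ae_of_all _ fun _ => by positivity)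
    (ae_of_all _ fun ω => norm_le_sqrt_of_isGreatest_inner_self hK (hfr ω))

/-- **Relationship of S-MMCE to S-BCE.** For any (continuous) kernel `k` on `[0,1]` with
feature map `φ` (so `k(α,α) = ⟪φ α, φ α⟫`), any `q ≥ 1`, and any `(f,g)` with
`P(g(X)=1) > 0`, letting `K := max_{α ∈ [0,1]} k(α,α)` (attained, expressed via
`IsGreatest`), we have `S-MMCE(f,g;q,k,P) ≤ K^{1/(2q)} · S-BCE(f,g;q,P)`. -/
theorem smmce_le_sbce
    {Ω : Type*} [MeasurableSpace Ω] (μ : Measure Ω) [IsProbabilityMeasure μ]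
    {H : Type*} [NormedAddCommGroup H] [InnerProductSpace ℝ H] [CompleteSpace H]
    (φ : ℝ → H) (hφ : Continuous φ)
    (K : ℝ) (hK : IsGreatest ((fun α => ⟪φ α, φ α⟫) '' Set.Icc (0:ℝ) 1) K)
    (f Y : Ω → ℝ) (g : Ω → Bool)
    (hf : Measurable f) (hY : Measurable Y) (hg : Measurable g)
    (hfr : ∀ ω, f ω ∈ Set.Icc (0:ℝ) 1) (hYr : ∀ ω, Y ω = 0 ∨ Y ω = 1)
    (hcov : 0 < μ {ω | g ω = true})
    (q : ℝ) (hq : 1 ≤ q) :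
    ‖∫ ω, |MeasureTheory.condExp (MeasurableSpace.comap f inferInstance)
          (ProbabilityTheory.cond μ {ω | g ω = true}) Y ω - f ω| ^ q • φ (f ω)
        ∂(ProbabilityTheory.cond μ {ω | g ω = true})‖ ^ (1/q)
      ≤ K ^ (1/(2*q)) *
        (∫ ω, |MeasureTheory.condExp (MeasurableSpace.comap f inferInstance)
            (ProbabilityTheory.cond μ {ω | g ω = true}) Y ω - f ω| ^ q
          ∂(ProbabilityTheory.cond μ {ω | g ω = true})) ^ (1/q) :=
  smmce_le_sbce_general μ φ K hK f Y g hf hfr hYr q hq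
end

section
/- Let g̃ : X → ℝ and let X₁,...,X_η be i.i.d. from P with g̃(X) having a continuous distribution. Let τ̂ := Threshold(ξ, {g̃(X₁),...,g̃(X_η)}) be the largest value τ such that at least a ξ-fraction of the η scores are ≥ τ. Then for every ε > 0, the probability (over the draw of X₁,...,X_η) that P(g̃(X) ≥ τ̂ | τ̂) ≤ ξ − ε is at most exp(−2ηε²). -/
/-!
Let `A` be the set of scores `x` whose true coverage `P[x, ∞)` is at most `ξ - ε`; it is an upper
set, and `P(A) ≤ ξ - ε` for every law `P`. If the tuned threshold has coverage at most `ξ - ε`,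
then every score above it lies in `A`, so at least `ξη` of the `η` sample points fall in `A`,
that is, the empirical frequency of `A` exceeds its probability by at least `ε`. Hoeffding's
inequality bounds the probability of this by `exp(-2ηε²)`.
-/

open MeasureTheory ProbabilityTheory

/-- `Threshold ξ s` is the largest `τ` such that at least a `ξ`-fraction of the scores
`s i` are `≥ τ`. -/
noncomputable def Threshold {η : ℕ} (ξ : ℝ) (s : Fin η → ℝ) : ℝ :=
  sSup {τ : ℝ | ξ ≤ ((Finset.univ.filter fun i => τ ≤ s i).card : ℝ) / η}

open Set Real
open scoped Finset

theorem measure_setOf_measure_Ici_le (μ : Measure ℝ) (r : ENNReal) :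
    μ {x | μ (Ici x) ≤ r} ≤ r := by
  set A := {x | μ (Ici x) ≤ r}
  have hA : IsUpperSet A := fun x y hxy hx => (measure_mono (Ici_subset_Ici.2 hxy)).trans hx
  by_cases hmin : ∃ a, IsLeast A a
  · obtain ⟨a, ha, hlow⟩ := hmin
    rwa [subset_antisymm (fun x hx => hlow hx) (hA.Ici_subset ha)]
  -- Without a least element, `A` is the directed union of the `Ici q` with rational `q ∈ A`.
  have hA_eq : A = ⋃ q : {q : ℚ // (q : ℝ) ∈ A}, Ici (q : ℝ) := by
    refine subset_antisymm (fun x hx => ?_) (iUnion_subset fun q => hA.Ici_subset q.2)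
    obtain ⟨y, hy, hyx⟩ : ∃ y ∈ A, y < x := by
      by_contra! h
      exact hmin ⟨x, hx, h⟩
    obtain ⟨q, hyq, hqx⟩ := exists_rat_btwn hyx
    exact mem_iUnion.2 ⟨⟨q, hA hyq.le hy⟩, hqx.le⟩
  have hdir : Directed (· ⊆ ·) fun q : {q : ℚ // (q : ℝ) ∈ A} => Ici (q : ℝ) := by
    intro q₁ q₂
    rcases le_total (q₁ : ℚ) q₂ with h | h
    · exact ⟨q₁, subset_rfl, Ici_subset_Ici.2 (by exact_mod_cast h)⟩
    · exact ⟨q₂, Ici_subset_Ici.2 (by exact_mod_cast h), subset_rfl⟩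
  rw [hA_eq, hdir.measure_iUnion]
  exact iSup_le fun q => q.2

theorem measureReal_pi_card_mem_ge_le {α : Type*} [MeasurableSpace α] (P : Measure α)
    [IsProbabilityMeasure P] {A : Set α} [DecidablePred (· ∈ A)] (hA : MeasurableSet A) (n : ℕ)
    {ε : ℝ} (hε : 0 ≤ ε) :
    (Measure.pi fun _ : Fin n => P).real {s | n * (P.real A + ε) ≤ #{i | s i ∈ A}}
      ≤ exp (-2 * n * ε ^ 2) := by
  set Y : α → ℝ := fun x => A.indicator 1 x - P.real A
  have hY : HasSubgaussianMGF Y ((‖(1 : ℝ) - 0‖₊ / 2) ^ 2) P := by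
    simpa [Y, integral_indicator_one hA] using
      hasSubgaussianMGF_of_mem_Icc (μ := P) (X := A.indicator 1) (a := 0) (b := 1)
        (measurable_one.indicator hA).aemeasurable
        (ae_of_all _ fun x => ⟨indicator_nonneg (fun _ _ => zero_le_one) x,
          indicator_le_self' (fun _ _ => zero_le_one) x⟩)
  have hYi (i : Fin n) :
      HasSubgaussianMGF (fun s : Fin n → α => Y (s i)) _ (Measure.pi fun _ => P) :=
    HasSubgaussianMGF.of_map (measurable_pi_apply i).aemeasurable
      (by rwa [(measurePreserving_eval (fun _ => P) i).map_eq])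
  have hindep : iIndepFun (fun i (s : Fin n → α) => Y (s i)) (Measure.pi fun _ => P) :=
    iIndepFun_pi fun _ => ((measurable_one.indicator hA).sub_const _).aemeasurable
  have hsum (s : Fin n → α) : ∑ i, Y (s i) = #{i | s i ∈ A} - n * P.real A := by
    simp [Y, Finset.sum_sub_distrib, indicator_apply, Finset.sum_boole]
  calc _ ≤ (Measure.pi fun _ => P).real {s | n * ε ≤ ∑ i, Y (s i)} := by
        refine measureReal_mono fun s hs => ?_
        simp only [mem_ofPred_eq, hsum] at hs ⊢
        linarith
    _ ≤ exp (-(n * ε) ^ 2 / (2 * ∑ _i : Fin n, ((‖(1 : ℝ) - 0‖₊ / 2) ^ 2 : NNReal))) :=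
        HasSubgaussianMGF.measure_sum_ge_le_of_iIndepFun hindep (fun i _ => hYi i) (by positivity)
    _ = exp (-2 * n * ε ^ 2) := by
        congr 1
        norm_num
        field_simp
        ring

theorem mul_le_card_threshold_le {η : ℕ} (hη : 0 < η) {ξ : ℝ} (hξ : ξ ∈ Ioc 0 1)
    (s : Fin η → ℝ) : ξ * η ≤ #{i | Threshold ξ s ≤ s i} := by
  set S := {τ : ℝ | ξ ≤ (#{i | τ ≤ s i} : ℝ) / η}
  have hηR : (0 : ℝ) < η := Nat.cast_pos.2 hη
  have hS_le_score (τ : ℝ) (hτ : τ ∈ S) : ∃ i, s i ∈ S ∧ τ ≤ s i := by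
    have hne : ({i | τ ≤ s i} : Finset (Fin η)).Nonempty := by
      rw [← Finset.card_pos, ← Nat.cast_pos (α := ℝ)]
      exact (div_pos_iff_of_pos_right hηR).1 (hξ.1.trans_le hτ)
    obtain ⟨i, hi, hmin⟩ := Finset.exists_min_image _ s hne
    refine ⟨i, le_trans (α := ℝ) hτ ?_, (Finset.mem_filter.1 hi).2⟩
    gcongr ?_ / _
    exact_mod_cast Finset.card_le_card fun j hj =>
      Finset.mem_filter.2 ⟨Finset.mem_univ j, hmin j hj⟩
  obtain ⟨i₀, -, hi₀⟩ :=
    (Finset.univ : Finset (Fin η)).exists_min_image s ⟨⟨0, hη⟩, Finset.mem_univ _⟩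
  have hmin_mem : s i₀ ∈ S := by
    simp only [S, mem_ofPred_eq, Finset.filter_true_of_mem fun i _ => hi₀ i (Finset.mem_univ i),
      Finset.card_univ, Fintype.card_fin, div_self hηR.ne']
    exact hξ.2
  obtain ⟨j, hj, hjmax⟩ := Finset.exists_max_image {i | s i ∈ S} s ⟨i₀, by simpa using hmin_mem⟩
  have hgreatest : IsGreatest S (s j) := by
    refine ⟨(Finset.mem_filter.1 hj).2, fun τ hτ => ?_⟩
    obtain ⟨i, hi, hτi⟩ := hS_le_score τ hτ
    exact hτi.trans (hjmax i (by simpa using hi))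
  rw [Threshold, hgreatest.csSup_eq]
  exact (le_div_iff₀ hηR).1 hgreatest.1

theorem coverage_tuning_general
    (P : Measure ℝ) [IsProbabilityMeasure P]
    (η : ℕ) (hη : 0 < η) (ξ : ℝ) (hξ : ξ ∈ Set.Ioc (0:ℝ) 1)
    (ε : ℝ) (hε : 0 < ε) :
    Measure.pi (fun _ : Fin η => P)
        {s | (P {x | Threshold ξ s ≤ x}).toReal ≤ ξ - ε}
      ≤ ENNReal.ofReal (Real.exp (-2 * η * ε ^ 2)) := by
  classical
  rcases lt_or_ge (ξ - ε) 0 with hneg | hnonneg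
  · refine (measure_mono_null (fun s hs => ?_) measure_empty).trans_le zero_le
    exact (ENNReal.toReal_nonneg.trans_lt (lt_of_le_of_lt hs hneg)).false
  set A := {x | P (Ici x) ≤ ENNReal.ofReal (ξ - ε)}
  have hA : MeasurableSet A :=
    (Antitone.measurable fun _ _ h => measure_mono (Ici_subset_Ici.2 h)) measurableSet_Iic
  have hPA : P.real A ≤ ξ - ε :=
    ENNReal.toReal_le_of_le_ofReal hnonneg (measure_setOf_measure_Ici_le P _)
  have hsub : {s | (P {x | Threshold ξ s ≤ x}).toReal ≤ ξ - ε}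
      ⊆ {s | η * (P.real A + ε) ≤ #{i | s i ∈ A}} := fun s hs => by
    have hcov : P (Ici (Threshold ξ s)) ≤ ENNReal.ofReal (ξ - ε) :=
      (ENNReal.le_ofReal_iff_toReal_le (measure_ne_top _ _) hnonneg).2 hs
    calc η * (P.real A + ε) ≤ ξ * η := by nlinarith
      _ ≤ #{i | Threshold ξ s ≤ s i} := mul_le_card_threshold_le hη hξ s
      _ ≤ #{i | s i ∈ A} := by
        exact_mod_cast Finset.card_le_card fun i hi => Finset.mem_filter.2 ⟨Finset.mem_univ i,
          (measure_mono (Ici_subset_Ici.2 (Finset.mem_filter.1 hi).2)).trans hcov⟩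
  exact (measure_mono hsub).trans <| (ENNReal.le_ofReal_iff_toReal_le (measure_ne_top _ _)
    (exp_pos _).le).2 (measureReal_pi_card_mem_ge_le P hA η hε.le)

/-- **Coverage tuning.** Let `g̃(X₁), …, g̃(X_η)` be i.i.d. scores with common (atomless)
law `P`, and let `τ̂ := Threshold(ξ, {g̃(X₁), …, g̃(X_η)})`. Then for every `ε > 0`, the
probability (over the draw of the sample) that the true coverage
`P(g̃(X) ≥ τ̂)` is at most `ξ − ε` is bounded by `exp(−2ηε²)`. -/
theorem coverage_tuning
    (P : Measure ℝ) [IsProbabilityMeasure P] (hP : ∀ x : ℝ, P {x} = 0)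
    (η : ℕ) (hη : 0 < η) (ξ : ℝ) (hξ : ξ ∈ Set.Ioc (0:ℝ) 1)
    (ε : ℝ) (hε : 0 < ε) :
    Measure.pi (fun _ : Fin η => P)
        {s | (P {x | Threshold ξ s ≤ x}).toReal ≤ ξ - ε}
      ≤ ENNReal.ofReal (Real.exp (-2 * η * ε ^ 2)) :=
  coverage_tuning_general P η hη ξ hξ ε hε
end

section
/- If k is a bounded kernel with K := sup_{α∈[0,1]} k(α,α) < ∞, then S-MMCE_u(f,g;q,k,P) ≤ K^{1/(2q)} · (E[|Y − V|^q])^{1/q}, where (V,Y) is distributed as (f(X),Y) given g(X)=1; in particular for q = 2 the S-MMCE_u is at most K^{1/4} times the square root of the selective Brier score. -/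
open MeasureTheory ProbabilityTheory
open scoped RealInnerProductSpace

/-! Since `‖φ v‖ = √k(v,v) ≤ √K` and the weight `|Y - V|^q` is nonnegative, the triangle
inequality for the Bochner integral gives `‖E[|Y - V|^q φ(V)]‖ ≤ √K · E[|Y - V|^q]`;
taking `q`-th roots turns `√K` into `K^{1/(2q)}`. -/

theorem norm_integral_smul_le_mul_integral_s14 {α E : Type*} [MeasurableSpace α]
    [NormedAddCommGroup E] [NormedSpace ℝ E] {μ : Measure α} {w : α → ℝ} {v : α → E} {C : ℝ}
    (hw : Integrable w μ) (hw0 : ∀ a, 0 ≤ w a) (hv : ∀ a, ‖v a‖ ≤ C) :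
    ‖∫ a, w a • v a ∂μ‖ ≤ C * ∫ a, w a ∂μ := by
  rw [← integral_const_mul]
  refine norm_integral_le_of_norm_le (hw.const_mul C) (.of_forall fun a => ?_)
  rw [norm_smul, Real.norm_of_nonneg (hw0 a), mul_comm]
  exact mul_le_mul_of_nonneg_right (hv a) (hw0 a)

theorem norm_le_sqrt_of_inner_self_le {H : Type*} [NormedAddCommGroup H] [InnerProductSpace ℝ H]
    {x : H} {K : ℝ} (h : ⟪x, x⟫ ≤ K) : ‖x‖ ≤ √K :=
  Real.le_sqrt_of_sq_le (real_inner_self_eq_norm_sq x ▸ h)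

theorem smmce_u_le_moment_general
    {Ω : Type*} [MeasurableSpace Ω] (μ : Measure Ω)
    {H : Type*} [NormedAddCommGroup H] [InnerProductSpace ℝ H] [CompleteSpace H]
    (φ : ℝ → H)
    (K : ℝ) (hK : IsLUB ((fun α => ⟪φ α, φ α⟫) '' Set.Icc (0:ℝ) 1) K)
    (f Y : Ω → ℝ) (g : Ω → Bool)
    (hf : Measurable f) (hY : Measurable Y)
    (hfr : ∀ ω, f ω ∈ Set.Icc (0:ℝ) 1) (hYr : ∀ ω, Y ω = 0 ∨ Y ω = 1)
    (q : ℝ) (hq : 1 ≤ q) :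
    ‖∫ ω, |Y ω - f ω| ^ q • φ (f ω) ∂(ProbabilityTheory.cond μ {ω | g ω = true})‖ ^ (1/q)
      ≤ K ^ (1/(2*q)) *
        (∫ ω, |Y ω - f ω| ^ q ∂(ProbabilityTheory.cond μ {ω | g ω = true})) ^ (1/q) := by
  set ν := ProbabilityTheory.cond μ {ω | g ω = true}
  have hq0 : 0 < q := one_pos.trans_le hq
  have hφ : ∀ ω, ‖φ (f ω)‖ ≤ √K := fun ω =>
    norm_le_sqrt_of_inner_self_le (hK.1 (Set.mem_image_of_mem _ (hfr ω)))
  have hK0 : 0 ≤ K :=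
    real_inner_self_nonneg.trans (hK.1 (Set.mem_image_of_mem _ (Set.left_mem_Icc.2 zero_le_one)))
  have hw0 : ∀ ω, 0 ≤ |Y ω - f ω| ^ q := fun ω => Real.rpow_nonneg (abs_nonneg _) q
  have hw1 : ∀ ω, |Y ω - f ω| ^ q ≤ 1 := fun ω => by
    have hYω : Y ω ∈ Set.Icc (0:ℝ) 1 := by rcases hYr ω with h | h <;> simp [h]
    exact Real.rpow_le_one (abs_nonneg _)
      (abs_sub_le_of_nonneg_of_le hYω.1 hYω.2 (hfr ω).1 (hfr ω).2) hq0.le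
  -- `cond μ s` is a zero-or-probability measure for every `μ` and `s`, hence finite.
  have hw : Integrable (fun ω => |Y ω - f ω| ^ q) ν :=
    .of_bound ((hY.sub hf).abs.pow_const q).aestronglyMeasurable 1 (.of_forall fun ω => by
      rw [Real.norm_of_nonneg (hw0 ω)]; exact hw1 ω)
  calc ‖∫ ω, |Y ω - f ω| ^ q • φ (f ω) ∂ν‖ ^ (1/q)
      ≤ (√K * ∫ ω, |Y ω - f ω| ^ q ∂ν) ^ (1/q) := by
        gcongr
        exact norm_integral_smul_le_mul_integral_s14 hw hw0 hφ
    _ = K ^ (1/(2*q)) * (∫ ω, |Y ω - f ω| ^ q ∂ν) ^ (1/q) := by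
      rw [Real.mul_rpow (Real.sqrt_nonneg K) (integral_nonneg hw0), Real.sqrt_eq_rpow,
        ← Real.rpow_mul hK0]
      ring_nf

/-- **S-MMCE_u bounded by the selective `q`-th moment.** If the kernel
`k(α,α) = ⟪φ α, φ α⟫` is bounded on `[0,1]` with supremum `K` (expressed via `IsLUB`),
then `S-MMCE_u(f,g;q,k,P) ≤ K^{1/(2q)} · (E[|Y − V|^q])^{1/q}`, where `(V, Y)` is
distributed as `(f(X), Y)` under the conditional law given `g(X)=1`.  (In particular,
for `q = 2` the S-MMCE_u is at most `K^{1/4}` times the square root of the selective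
Brier score.) -/
theorem smmce_u_le_moment
    {Ω : Type*} [MeasurableSpace Ω] (μ : Measure Ω) [IsProbabilityMeasure μ]
    {H : Type*} [NormedAddCommGroup H] [InnerProductSpace ℝ H] [CompleteSpace H]
    (φ : ℝ → H)
    (K : ℝ) (hK : IsLUB ((fun α => ⟪φ α, φ α⟫) '' Set.Icc (0:ℝ) 1) K)
    (f Y : Ω → ℝ) (g : Ω → Bool)
    (hf : Measurable f) (hY : Measurable Y) (hg : Measurable g)
    (hfr : ∀ ω, f ω ∈ Set.Icc (0:ℝ) 1) (hYr : ∀ ω, Y ω = 0 ∨ Y ω = 1)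
    (hcov : 0 < μ {ω | g ω = true})
    (q : ℝ) (hq : 1 ≤ q) :
    ‖∫ ω, |Y ω - f ω| ^ q • φ (f ω) ∂(ProbabilityTheory.cond μ {ω | g ω = true})‖ ^ (1/q)
      ≤ K ^ (1/(2*q)) *
        (∫ ω, |Y ω - f ω| ^ q ∂(ProbabilityTheory.cond μ {ω | g ω = true})) ^ (1/q) :=
  smmce_u_le_moment_general μ φ K hK f Y g hf hY hfr hYr q hq
end
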